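/- arXiv:math/0509265 — 2 statements merged into one kernel-verified Lean document; each statement's English description precedes it below -/
import Mathlib

section
/- Every connected component of the poset of set compositions of [n] under the order ≤_* is a boolean lattice: specifically, the set of elements ≥_* a minimal element Π (a set composition all of whose parts are singletons, i.e. a permutation) is isomorphic to the boolean lattice on the set {i : Π_i < Π_{i+1}}. -/
open scoped Classical
noncomputable section

/-- The ground set `[n] = {1, …, n}`. -/
def ground (n : ℕ) : Finset ℕ := Finset.Icc 1 n

/-- `A` is a set partition of `[n]`. -/
def IsSetPartition (n : ℕ) (A : Finset (Finset ℕ)) : Prop :=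
  (∀ B ∈ A, B.Nonempty) ∧
  (∀ B ∈ A, ∀ C ∈ A, B ≠ C → Disjoint B C) ∧
  A.sup id = ground n

/-- Shift every entry of every part by `n`. -/
def shiftP (n : ℕ) (A : Finset (Finset ℕ)) : Finset (Finset ℕ) :=
  A.image (fun B => B.image (· + n))

/-- Shifted concatenation `A|B` of a set partition `A ⊢ [n]` with `B`. -/
def concatP (n : ℕ) (A B : Finset (Finset ℕ)) : Finset (Finset ℕ) :=
  A ∪ shiftP n B

/-- `A` is an atomic set partition of `[n]`: nonempty and not a nontrivial
shifted concatenation. -/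
def AtomicP (n : ℕ) (A : Finset (Finset ℕ)) : Prop :=
  IsSetPartition n A ∧ 0 < n ∧
  ¬ ∃ k B C, 0 < k ∧ k < n ∧ IsSetPartition k B ∧ IsSetPartition (n - k) C ∧
      A = concatP k B C

/-- Shifted concatenation of a list of (size, set partition) pairs. -/
def concatListP : List (ℕ × Finset (Finset ℕ)) → ℕ × Finset (Finset ℕ)
  | [] => (0, ∅)
  | p :: L => ((concatListP L).1 + p.1, concatP p.1 p.2 (concatListP L).2)

/-- `L` is the atomic factorization `A^!` of the set partition `A ⊢ [n]`. -/
def AtomicFactorization (n : ℕ) (A : Finset (Finset ℕ))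
    (L : List (ℕ × Finset (Finset ℕ))) : Prop :=
  (∀ p ∈ L, AtomicP p.1 p.2) ∧ concatListP L = (n, A)

/-- The Bell number: the number of set partitions of `[n]`. -/
def bell (n : ℕ) : ℕ := Nat.card {A : Finset (Finset ℕ) // IsSetPartition n A}

/-- Stirling numbers of the second kind: set partitions of `[n]` into `k` parts. -/
def stirling2 (n k : ℕ) : ℕ :=
  Nat.card {A : Finset (Finset ℕ) // IsSetPartition n A ∧ A.card = k}

/-- The number of atomic set partitions of `[n]` into `k` parts. -/
def atomCount (n k : ℕ) : ℕ :=
  Nat.card {A : Finset (Finset ℕ) // AtomicP n A ∧ A.card = k}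

/-- The number of atomic set partitions of `[n]`. -/
def atomCount' (n : ℕ) : ℕ := Nat.card {A : Finset (Finset ℕ) // AtomicP n A}

/-- Refinement order: `A ≤ B` iff every part of `A` is contained in a part of `B`. -/
def refines (A B : Finset (Finset ℕ)) : Prop := ∀ a ∈ A, ∃ b ∈ B, a ⊆ b

/-- The meet `A ∧ B` of two set partitions. -/
def meetP (A B : Finset (Finset ℕ)) : Finset (Finset ℕ) :=
  ((A ×ˢ B).image fun p => p.1 ∩ p.2).filter (·.Nonempty)

/-- The set partition `{[n]}` with a single part (empty if `n = 0`). -/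
def onePartP (n : ℕ) : Finset (Finset ℕ) := if n = 0 then ∅ else {ground n}

/-- The finite set of set partitions of `[n]` satisfying a predicate `P`. -/
def SPs (n : ℕ) (P : Finset (Finset ℕ) → Prop) : Finset (Finset (Finset ℕ)) :=
  (ground n).powerset.powerset.filter fun A => IsSetPartition n A ∧ P A

/-- Covering relation for `≤_*`: `B` covers `A` if `B` is obtained from `A` by merging two
parts `a, a'` with every element of `a` smaller than every element of `a'`. -/
def coverStar (A B : Finset (Finset ℕ)) : Prop :=
  ∃ a ∈ A, ∃ a' ∈ A, a ≠ a' ∧ (∀ x ∈ a, ∀ y ∈ a', x < y) ∧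
    B = insert (a ∪ a') ((A.erase a).erase a')

/-- The order `≤_*` on set partitions. -/
def leStar : Finset (Finset ℕ) → Finset (Finset ℕ) → Prop :=
  Relation.ReflTransGen coverStar

/-- Restriction `A↓_S` of a set partition to the entries in `S`. -/
def restrictP (A : Finset (Finset ℕ)) (S : Finset ℕ) : Finset (Finset ℕ) :=
  (A.image (· ∩ S)).filter (·.Nonempty)

/-- The standardization map of a finite set `S`: sends the `i`-th smallest element of `S`
to `i` (1-indexed). -/
def stMap (S : Finset ℕ) (x : ℕ) : ℕ := (S.filter (· ≤ x)).card

/-- Standardization of a set partition: relabel its entries to `{1,…,m}` preserving order. -/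
def stdP (A : Finset (Finset ℕ)) : Finset (Finset ℕ) :=
  A.image fun b => b.image (stMap (A.sup id))

/-- The map raising `{1,…,|S|}` order-preservingly onto `S`. -/
def raiseMap (S : Finset ℕ) (x : ℕ) : ℕ := (S.sort (· ≤ ·)).getD (x - 1) 0

/-- `A↑_S`: raise the entries of `A` order-preservingly so the ground set becomes `S`. -/
def raiseP (S : Finset ℕ) (A : Finset (Finset ℕ)) : Finset (Finset ℕ) :=
  A.image fun b => b.image (raiseMap S)

/-- `IsShuffle l₁ l₂ l`: `l` is a shuffle (interleaving) of `l₁` and `l₂`. -/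
inductive IsShuffle {α : Type*} : List α → List α → List α → Prop
  | nil : IsShuffle [] [] []
  | left {a : α} {l₁ l₂ l : List α} : IsShuffle l₁ l₂ l → IsShuffle (a :: l₁) l₂ (a :: l)
  | right {a : α} {l₁ l₂ l : List α} : IsShuffle l₁ l₂ l → IsShuffle l₁ (a :: l₂) (a :: l)

/-- A word is Lyndon if it is nonempty and lexicographically strictly smaller than all of
its proper cyclic rotations. -/
def LyndonWord {α : Type*} (lt : α → α → Prop) (w : List α) : Prop :=
  w ≠ [] ∧ ∀ i, 0 < i → i < w.length → List.Lex lt w (w.rotate i)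

/-- A set partition is Lyndon (with respect to a total order `lt` on atomic set partitions)
if its atomic factorization is a Lyndon word. -/
def LyndonPartition (lt : ℕ × Finset (Finset ℕ) → ℕ × Finset (Finset ℕ) → Prop)
    (n : ℕ) (A : Finset (Finset ℕ)) : Prop :=
  ∃ L, AtomicFactorization n A L ∧ LyndonWord lt L

/-! ### Set compositions -/

/-- `Φ` is a set composition of `[n]`: an ordered sequence of nonempty pairwise disjoint
sets whose union is `[n]`. -/
def IsSetComposition (n : ℕ) (Φ : List (Finset ℕ)) : Prop :=
  (∀ B ∈ Φ, B.Nonempty) ∧ Φ.Pairwise Disjoint ∧ Φ.foldr (· ∪ ·) ∅ = ground n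

/-- Shift every entry of every part of a set composition by `n`. -/
def shiftC (n : ℕ) (Φ : List (Finset ℕ)) : List (Finset ℕ) :=
  Φ.map (·.image (· + n))

/-- Shifted concatenation `Φ|Ψ` of set compositions, `Φ ⊨ [n]`. -/
def concatC (n : ℕ) (Φ Ψ : List (Finset ℕ)) : List (Finset ℕ) := Φ ++ shiftC n Ψ

/-- An atomic set composition: nonempty and not a nontrivial shifted concatenation. -/
def AtomicC (n : ℕ) (Φ : List (Finset ℕ)) : Prop :=
  IsSetComposition n Φ ∧ 0 < n ∧
  ¬ ∃ k Ψ Γ, 0 < k ∧ k < n ∧ IsSetComposition k Ψ ∧ IsSetComposition (n - k) Γ ∧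
      Φ = concatC k Ψ Γ

/-- Shifted concatenation of a list of (size, set composition) pairs. -/
def concatListC : List (ℕ × List (Finset ℕ)) → ℕ × List (Finset ℕ)
  | [] => (0, [])
  | p :: L => ((concatListC L).1 + p.1, concatC p.1 p.2 (concatListC L).2)

/-- `L` is the atomic factorization `Φ^!` of the set composition `Φ ⊨ [n]`. -/
def AtomicFactorizationC (n : ℕ) (Φ : List (Finset ℕ))
    (L : List (ℕ × List (Finset ℕ))) : Prop :=
  (∀ p ∈ L, AtomicC p.1 p.2) ∧ concatListC L = (n, Φ)

/-- Covering relation for `≤_*` on set compositions: merge two adjacent parts `a, b` with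
every element of `a` smaller than every element of `b`. -/
def coverStarC (Φ Ψ : List (Finset ℕ)) : Prop :=
  ∃ L₁ a b L₂, Φ = L₁ ++ a :: b :: L₂ ∧ (∀ x ∈ a, ∀ y ∈ b, x < y) ∧
    Ψ = L₁ ++ (a ∪ b) :: L₂

/-- The order `≤_*` on set compositions. -/
def leStarC : List (Finset ℕ) → List (Finset ℕ) → Prop :=
  Relation.ReflTransGen coverStarC

/-- The meet operation `Φ ∧ Ψ` on set compositions: the nonempty intersections
`Φ_i ∩ Ψ_j` in lexicographic order of `(i, j)`. -/
def meetC (Φ Ψ : List (Finset ℕ)) : List (Finset ℕ) :=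
  (Φ.flatMap fun a => Ψ.map fun b => a ∩ b).filter (·.Nonempty)

/-- The one-part set composition `([n])` (empty if `n = 0`). -/
def onePartC (n : ℕ) : List (Finset ℕ) := if n = 0 then [] else [ground n]

/-- Lists of length `k` with all entries in `s`. -/
def listsOfLen (s : Finset (Finset ℕ)) : ℕ → Finset (List (Finset ℕ))
  | 0 => {[]}
  | k + 1 => (s ×ˢ listsOfLen s k).image fun p => p.1 :: p.2

/-- The finite set of set compositions of `[n]` satisfying a predicate `P`. -/
def SCs (n : ℕ) (P : List (Finset ℕ) → Prop) : Finset (List (Finset ℕ)) :=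
  ((Finset.range (n + 1)).biUnion fun k => listsOfLen (ground n).powerset k).filter
    fun Φ => IsSetComposition n Φ ∧ P Φ

/-- `Φ↑_S`: raise the entries of a set composition order-preservingly into `S`. -/
def raiseC (S : Finset ℕ) (Φ : List (Finset ℕ)) : List (Finset ℕ) :=
  Φ.map (·.image (raiseMap S))

/-- Standardization of a set composition. -/
def stdC (Φ : List (Finset ℕ)) : List (Finset ℕ) :=
  Φ.map (·.image (stMap (Φ.foldr (· ∪ ·) ∅)))

/-- `α(Φ)`: the composition of part sizes of `Φ`. -/
def alphaC (Φ : List (Finset ℕ)) : List ℕ := Φ.map Finset.card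

/-- The order `≤_#` on set compositions: `Φ ≤_# Ψ` iff `α(Φ) = α(Ψ)` and each atomic factor
of `Φ` is the standardization of the corresponding consecutive block of parts of `Ψ`. -/
def leSharp (Φ Ψ : List (Finset ℕ)) : Prop :=
  alphaC Φ = alphaC Ψ ∧
  ∃ (L : List (ℕ × List (Finset ℕ))) (Bs : List (List (Finset ℕ))),
    (∀ p ∈ L, AtomicC p.1 p.2) ∧ (concatListC L).2 = Φ ∧
    Ψ = Bs.flatten ∧ List.Forall₂ (fun b (l : ℕ × List (Finset ℕ)) => stdC b = l.2) Bs L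

/-! ### Index types -/

/-- Set partitions with their sizes. -/
abbrev SPIdx := {x : ℕ × Finset (Finset ℕ) // IsSetPartition x.1 x.2}

/-- Atomic set partitions with their sizes. -/
abbrev AtomIdx := {x : ℕ × Finset (Finset ℕ) // AtomicP x.1 x.2}

/-- Set compositions with their sizes. -/
abbrev SCIdx := {x : ℕ × List (Finset ℕ) // IsSetComposition x.1 x.2}

/-- Atomic set compositions with their sizes. -/
abbrev AtomCIdx := {x : ℕ × List (Finset ℕ) // AtomicC x.1 x.2}

/-!
Every `Φ ≥_* P` is obtained from `P` by gluing the adjacent parts `P i`, `P (i + 1)` for `i` in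
a set `T` of ascents of `P`. Gluing along `T` and then along one more ascent is a single cover,
and conversely each cover of a gluing glues along exactly one more ascent (the last part inside the
left block and the first part inside the right block of the merge form an ascent). As the parts of
`P` are nonempty and disjoint, the gluing determines `T`, so `T ↦ glue T P` is an order
isomorphism onto the upper set of `P`.
-/

section Glue

variable {α : Type*} [DecidableEq α]

def unionHead (a : Finset α) : List (Finset α) → List (Finset α)
  | [] => [a]
  | b :: r => (a ∪ b) :: r

/-- `glue s P` merges the parts `P i` and `P (i + 1)` for every `i ∈ s`, indexing from `0`. -/
def glue (s : Set ℕ) : List (Finset α) → List (Finset α)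
  | [] => []
  | a :: l =>
    if 0 ∈ s then unionHead a (glue ((· + 1) ⁻¹' s) l) else a :: glue ((· + 1) ⁻¹' s) l

lemma glue_cons (s : Set ℕ) (a : Finset α) (l : List (Finset α)) :
    glue s (a :: l) =
      if 0 ∈ s then unionHead a (glue ((· + 1) ⁻¹' s) l) else a :: glue ((· + 1) ⁻¹' s) l :=
  rfl

@[simp]
lemma preimage_succ_insert_zero (s : Set ℕ) : (· + 1) ⁻¹' insert 0 s = (· + 1) ⁻¹' s := by
  ext; simp

@[simp]
lemma preimage_succ_insert_succ (s : Set ℕ) (j : ℕ) :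
    (· + 1) ⁻¹' insert (j + 1) s = insert j ((· + 1) ⁻¹' s) := by
  ext; simp

lemma glue_empty (l : List (Finset α)) : glue ∅ l = l := by
  induction l with
  | nil => rfl
  | cons a l ih => simp [glue, ih]

lemma exists_glue_cons_eq_cons (s : Set ℕ) (a : Finset α) (l : List (Finset α)) :
    ∃ b r, glue s (a :: l) = b :: r ∧ a ⊆ b := by
  rw [glue_cons]
  split_ifs
  · cases glue ((· + 1) ⁻¹' s) l <;> simp [unionHead]
  · exact ⟨a, _, rfl, subset_rfl⟩

lemma foldr_union_unionHead (a : Finset α) (L : List (Finset α)) :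
    (unionHead a L).foldr (· ∪ ·) ∅ = a ∪ L.foldr (· ∪ ·) ∅ := by
  cases L <;> simp [unionHead, Finset.union_assoc]

lemma foldr_union_glue (s : Set ℕ) (l : List (Finset α)) :
    (glue s l).foldr (· ∪ ·) ∅ = l.foldr (· ∪ ·) ∅ := by
  induction l generalizing s with
  | nil => rfl
  | cons a l ih => rw [glue_cons]; split_ifs <;> simp [foldr_union_unionHead, ih]

lemma disjoint_foldr_union_right {a : Finset α} {L : List (Finset α)} :
    Disjoint a (L.foldr (· ∪ ·) ∅) ↔ ∀ b ∈ L, Disjoint a b := by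
  induction L <;> simp [*]

lemma forall_disjoint_glue {a : Finset α} (s : Set ℕ) {l : List (Finset α)}
    (h : ∀ b ∈ l, Disjoint a b) : ∀ b ∈ glue s l, Disjoint a b := by
  rw [← disjoint_foldr_union_right, foldr_union_glue, disjoint_foldr_union_right]
  exact h

lemma forall_nonempty_glue (s : Set ℕ) {l : List (Finset α)} (hne : ∀ B ∈ l, B.Nonempty) :
    ∀ B ∈ glue s l, B.Nonempty := by
  induction l generalizing s with
  | nil => simp [glue]
  | cons a l ih =>
    have ha : a.Nonempty := hne a List.mem_cons_self
    have hl := ih ((· + 1) ⁻¹' s) fun B hB => hne B (List.mem_cons_of_mem _ hB)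
    rw [glue_cons]
    split_ifs
    · cases hg : glue ((· + 1) ⁻¹' s) l with
      | nil => simpa [unionHead] using ha
      | cons b r =>
        rw [hg, List.forall_mem_cons] at hl
        simpa [unionHead, ha.mono Finset.subset_union_left] using hl.2
    · simpa [ha] using hl

lemma pairwise_disjoint_glue (s : Set ℕ) {l : List (Finset α)} (hd : l.Pairwise Disjoint) :
    (glue s l).Pairwise Disjoint := by
  induction l generalizing s with
  | nil => simp [glue]
  | cons a l ih =>
    rw [List.pairwise_cons] at hd
    have hg := ih ((· + 1) ⁻¹' s) hd.2
    have ha := forall_disjoint_glue ((· + 1) ⁻¹' s) hd.1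
    rw [glue_cons]
    split_ifs
    · cases hg' : glue ((· + 1) ⁻¹' s) l with
      | nil => simp [unionHead]
      | cons b r =>
        rw [hg', List.pairwise_cons] at hg
        rw [hg'] at ha
        refine List.pairwise_cons.2 ⟨fun c hc => ?_, hg.2⟩
        exact Finset.disjoint_union_left.2 ⟨ha c (List.mem_cons_of_mem _ hc), hg.1 c hc⟩
    · exact List.pairwise_cons.2 ⟨ha, hg⟩

lemma mem_iff_mem_of_glue_eq {s t : Set ℕ} {l : List (Finset α)} (hne : ∀ B ∈ l, B.Nonempty)
    (hd : l.Pairwise Disjoint) (h : glue s l = glue t l) {i : ℕ} (hi : i + 1 < l.length) :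
    i ∈ s ↔ i ∈ t := by
  induction l generalizing s t i with
  | nil => simp at hi
  | cons a l ih =>
    rcases l with _ | ⟨c, l⟩
    · simp at hi
    rw [List.pairwise_cons] at hd
    have hc : c.Nonempty := hne c (by simp)
    obtain ⟨b, r, hb, hcb⟩ := exists_glue_cons_eq_cons ((· + 1) ⁻¹' s) c l
    obtain ⟨b', r', hb', hcb'⟩ := exists_glue_cons_eq_cons ((· + 1) ⁻¹' t) c l
    have hab := forall_disjoint_glue _ hd.1 b (hb ▸ List.mem_cons_self)
    have hab' := forall_disjoint_glue _ hd.1 b' (hb' ▸ List.mem_cons_self)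
    have hca : ¬ c ⊆ a := fun hca =>
      hc.ne_empty (Finset.disjoint_self_iff_empty _ |>.1 ((hd.1 c (by simp)).mono_left hca))
    have hcons : (0 ∈ s ↔ 0 ∈ t) ∧
        glue ((· + 1) ⁻¹' s) (c :: l) = glue ((· + 1) ⁻¹' t) (c :: l) := by
      rw [glue_cons s, glue_cons t, hb, hb'] at h
      split_ifs at h with hs ht ht <;> simp only [unionHead, List.cons.injEq] at h
      · rw [hb, hb', ← Finset.union_sdiff_cancel_left hab, h.1,
          Finset.union_sdiff_cancel_left hab', h.2]
        simp [hs, ht]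
      · exact absurd (hcb.trans (h.1 ▸ Finset.subset_union_right)) hca
      · exact absurd (hcb'.trans (h.1 ▸ Finset.subset_union_right)) hca
      · simp [hs, ht, hb, hb', h.2]
    cases i with
    | zero => exact hcons.1
    | succ i =>
      exact ih (fun B hB => hne B (List.mem_cons_of_mem _ hB)) hd.2 hcons.2 (by simpa using hi)

lemma exists_glue_insert_eq_of_glue_eq {s : Set ℕ} {l L₁ L₂ : List (Finset α)} {B C : Finset α}
    (h : glue s l = L₁ ++ B :: C :: L₂) :
    ∃ j, j + 1 < l.length ∧ l.getD j ∅ ⊆ B ∧ l.getD (j + 1) ∅ ⊆ C ∧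
      glue (insert j s) l = L₁ ++ (B ∪ C) :: L₂ := by
  induction l generalizing s L₁ B with
  | nil => cases L₁ <;> simp [glue] at h
  | cons a l ih =>
    rw [glue_cons] at h
    split_ifs at h with h0
    · obtain ⟨b, r, hg⟩ : ∃ b r, glue ((· + 1) ⁻¹' s) l = b :: r := by
        cases hg : glue ((· + 1) ⁻¹' s) l with
        | nil => cases L₁ <;> simp [hg, unionHead] at h
        | cons b r => exact ⟨b, r, rfl⟩
      rw [hg] at h
      cases L₁ with
      | nil =>
        obtain ⟨rfl, rfl⟩ : a ∪ b = B ∧ r = C :: L₂ := by simpa [unionHead] using h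
        obtain ⟨j, hj, hjB, hjC, hins⟩ := ih (L₁ := []) hg
        refine ⟨j + 1, by simpa using hj, hjB.trans Finset.subset_union_right, hjC, ?_⟩
        simp [glue_cons, h0, hins, unionHead, Finset.union_assoc]
      | cons x L₁ =>
        obtain ⟨rfl, rfl⟩ : a ∪ b = x ∧ r = L₁ ++ B :: C :: L₂ := by simpa [unionHead] using h
        obtain ⟨j, hj, hjB, hjC, hins⟩ := ih (L₁ := b :: L₁) hg
        refine ⟨j + 1, by simpa using hj, hjB, hjC, ?_⟩
        simp [glue_cons, h0, hins, unionHead]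
    · cases L₁ with
      | nil =>
        obtain ⟨rfl, hg⟩ : a = B ∧ glue ((· + 1) ⁻¹' s) l = C :: L₂ := by simpa using h
        cases l with
        | nil => simp [glue] at hg
        | cons c l =>
          obtain ⟨b, r, hb, hcb⟩ := exists_glue_cons_eq_cons ((· + 1) ⁻¹' s) c l
          obtain ⟨rfl, rfl⟩ : b = C ∧ r = L₂ := by simpa [hb] using hg
          exact ⟨0, by simp, subset_rfl, hcb, by simp [glue_cons, hb, unionHead]⟩
      | cons x L₁ =>
        obtain ⟨rfl, hg⟩ : a = x ∧ glue ((· + 1) ⁻¹' s) l = L₁ ++ B :: C :: L₂ := by simpa using h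
        obtain ⟨j, hj, hjB, hjC, hins⟩ := ih hg
        refine ⟨j + 1, by simpa using hj, hjB, hjC, ?_⟩
        simp [glue_cons, h0, hins]

end Glue

abbrev ascents (P : List (Finset ℕ)) : Finset ℕ :=
  (Finset.range (P.length - 1)).filter
    (fun i => ∀ x ∈ P.getD i ∅, ∀ y ∈ P.getD (i + 1) ∅, x < y)

lemma lt_length_of_mem_ascents {P : List (Finset ℕ)} {i : ℕ} (h : i ∈ ascents P) :
    i + 1 < P.length := by
  simp only [ascents, Finset.mem_filter, Finset.mem_range] at h
  omega

lemma succ_mem_ascents_cons {a : Finset ℕ} {l : List (Finset ℕ)} {i : ℕ} :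
    i + 1 ∈ ascents (a :: l) ↔ i ∈ ascents l := by
  simp only [ascents, Finset.mem_filter, Finset.mem_range, List.length_cons,
    List.getD_cons_succ]
  exact and_congr_left fun _ => by omega

lemma zero_mem_ascents_cons_cons {a c : Finset ℕ} {l : List (Finset ℕ)} :
    0 ∈ ascents (a :: c :: l) ↔ ∀ x ∈ a, ∀ y ∈ c, x < y := by
  simp [ascents]

lemma preimage_succ_subset_ascents {s : Set ℕ} {a : Finset ℕ} {l : List (Finset ℕ)}
    (hs : s ⊆ ascents (a :: l)) : (· + 1) ⁻¹' s ⊆ ascents l :=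
  fun _ hi => succ_mem_ascents_cons.1 (hs hi)

lemma lt_of_mem_head_glue {s : Set ℕ} {c : Finset ℕ} {l : List (Finset ℕ)}
    (hne : ∀ B ∈ c :: l, B.Nonempty) (hs : s ⊆ ascents (c :: l)) {u : ℕ} (hu : ∀ y ∈ c, u < y)
    {b : Finset ℕ} {r : List (Finset ℕ)} (h : glue s (c :: l) = b :: r) : ∀ y ∈ b, u < y := by
  induction l generalizing s c u b r with
  | nil =>
    obtain ⟨rfl, -⟩ : c = b ∧ r = [] := by simpa [glue, unionHead] using h
    exact hu
  | cons d l ih =>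
    obtain ⟨b', r', hb', -⟩ := exists_glue_cons_eq_cons ((· + 1) ⁻¹' s) d l
    rw [glue_cons, hb'] at h
    split_ifs at h with h0
    · obtain ⟨rfl, -⟩ : c ∪ b' = b ∧ r' = r := by simpa [unionHead] using h
      obtain ⟨z, hz⟩ := hne c List.mem_cons_self
      have hud : ∀ y ∈ d, u < y := fun y hy =>
        (hu z hz).trans (zero_mem_ascents_cons_cons.1 (hs h0) z hz y hy)
      intro y hy
      rcases Finset.mem_union.1 hy with hy | hy
      · exact hu y hy
      · exact ih (fun B hB => hne B (List.mem_cons_of_mem _ hB))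
          (preimage_succ_subset_ascents hs) hud hb' y hy
    · obtain ⟨rfl, -⟩ : c = b ∧ _ := List.cons.inj h
      exact hu

lemma coverStarC.cons {L L' : List (Finset ℕ)} (h : coverStarC L L') (a : Finset ℕ) :
    coverStarC (a :: L) (a :: L') := by
  obtain ⟨L₁, B, C, L₂, rfl, hBC, rfl⟩ := h
  exact ⟨a :: L₁, B, C, L₂, rfl, hBC, rfl⟩

lemma coverStarC.union_head {b b' : Finset ℕ} {r r' : List (Finset ℕ)}
    (h : coverStarC (b :: r) (b' :: r')) {a : Finset ℕ} {z : ℕ} (hz : z ∈ b)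
    (ha : ∀ x ∈ a, x < z) : coverStarC ((a ∪ b) :: r) ((a ∪ b') :: r') := by
  obtain ⟨L₁, B, C, L₂, h₁, hBC, h₂⟩ := h
  cases L₁ with
  | nil =>
    obtain ⟨rfl, rfl⟩ : b = B ∧ r = C :: L₂ := by simpa using h₁
    obtain ⟨rfl, rfl⟩ : b' = b ∪ C ∧ r' = L₂ := by simpa using h₂
    refine ⟨[], _, C, _, rfl, fun x hx y hy => ?_, by simp [Finset.union_assoc]⟩
    rcases Finset.mem_union.1 hx with hx | hx
    · exact (ha x hx).trans (hBC z hz y hy)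
    · exact hBC x hx y hy
  | cons x L₁ =>
    obtain ⟨rfl, rfl⟩ : b = x ∧ r = L₁ ++ B :: C :: L₂ := by simpa using h₁
    obtain ⟨rfl, rfl⟩ : b' = b ∧ r' = L₁ ++ (B ∪ C) :: L₂ := by simpa using h₂
    exact ⟨_ :: L₁, B, C, L₂, rfl, hBC, rfl⟩

lemma coverStarC_glue_insert {s : Set ℕ} {l : List (Finset ℕ)} (hne : ∀ B ∈ l, B.Nonempty)
    (hs : s ⊆ ascents l) {j : ℕ} (hj : j ∈ ascents l) (hjs : j ∉ s) :
    coverStarC (glue s l) (glue (insert j s) l) := by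
  induction l generalizing s j with
  | nil => simp [ascents] at hj
  | cons a l ih =>
    rcases l with _ | ⟨c, l⟩
    · simp [ascents] at hj
    have hne' : ∀ B ∈ c :: l, B.Nonempty := fun B hB => hne B (List.mem_cons_of_mem _ hB)
    obtain ⟨b, r, hb, hcb⟩ := exists_glue_cons_eq_cons ((· + 1) ⁻¹' s) c l
    cases j with
    | zero =>
      rw [glue_cons s, if_neg hjs, glue_cons (insert 0 s), if_pos (Set.mem_insert _ _),
        preimage_succ_insert_zero, hb]
      refine ⟨[], a, b, r, rfl, fun x hx => ?_, rfl⟩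
      exact lt_of_mem_head_glue hne' (preimage_succ_subset_ascents hs)
        (zero_mem_ascents_cons_cons.1 hj x hx) hb
    | succ j =>
      have hcov := ih hne' (preimage_succ_subset_ascents hs) (succ_mem_ascents_cons.1 hj) hjs
      rw [glue_cons s, glue_cons (insert (j + 1) s), preimage_succ_insert_succ]
      by_cases h0 : 0 ∈ s
      · obtain ⟨b', r', hb', -⟩ := exists_glue_cons_eq_cons (insert j ((· + 1) ⁻¹' s)) c l
        rw [if_pos h0, if_pos (Set.mem_insert_of_mem _ h0), hb, hb']
        rw [hb, hb'] at hcov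
        obtain ⟨z, hz⟩ := hne c (by simp)
        exact hcov.union_head (hcb hz) fun x hx =>
          zero_mem_ascents_cons_cons.1 (hs h0) x hx z hz
      · rw [if_neg h0, if_neg (by simpa using h0)]
        exact hcov.cons a

lemma IsSetComposition.glue {n : ℕ} {P : List (Finset ℕ)} (hP : IsSetComposition n P)
    (s : Set ℕ) : IsSetComposition n (glue s P) :=
  ⟨forall_nonempty_glue s hP.1, pairwise_disjoint_glue s hP.2.1,
    (foldr_union_glue s P).trans hP.2.2⟩

lemma glue_injOn_ascents {P : List (Finset ℕ)} (hne : ∀ B ∈ P, B.Nonempty)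
    (hd : P.Pairwise Disjoint) {T T' : Finset ℕ} (hT : T ⊆ ascents P) (hT' : T' ⊆ ascents P)
    (h : glue (T : Set ℕ) P = glue (T' : Set ℕ) P) : T = T' := by
  ext i
  by_cases hi : i + 1 < P.length
  · exact_mod_cast mem_iff_mem_of_glue_eq hne hd h hi
  · exact iff_of_false (fun h => hi (lt_length_of_mem_ascents (hT h)))
      (fun h => hi (lt_length_of_mem_ascents (hT' h)))

lemma leStarC_glue_of_subset {P : List (Finset ℕ)} (hne : ∀ B ∈ P, B.Nonempty)
    {T T' : Finset ℕ} (hTT' : T ⊆ T') (hT' : T' ⊆ ascents P) :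
    leStarC (glue (T : Set ℕ) P) (glue (T' : Set ℕ) P) := by
  suffices ∀ D : Finset ℕ, T ∪ D ⊆ ascents P →
      leStarC (glue (T : Set ℕ) P) (glue ((T ∪ D : Finset ℕ) : Set ℕ) P) by
    rw [← Finset.union_sdiff_of_subset hTT'] at hT' ⊢
    exact this _ hT'
  intro D
  induction D using Finset.induction_on with
  | empty =>
    intro _
    rw [Finset.union_empty]
    exact Relation.ReflTransGen.refl
  | insert j D _ ih =>
    intro hD
    rw [Finset.union_insert] at hD ⊢
    have hD' := (Finset.subset_insert _ _).trans hD
    by_cases hj : j ∈ T ∪ D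
    · rw [Finset.insert_eq_of_mem hj]
      exact ih hD'
    · refine (ih hD').tail ?_
      rw [Finset.coe_insert]
      exact coverStarC_glue_insert hne (by exact_mod_cast hD') (hD (Finset.mem_insert_self _ _))
        (by exact_mod_cast hj)

lemma exists_eq_glue_of_leStarC {P : List (Finset ℕ)} {T : Finset ℕ} (hT : T ⊆ ascents P)
    {Ψ : List (Finset ℕ)} (h : leStarC (glue (T : Set ℕ) P) Ψ) :
    ∃ T', T ⊆ T' ∧ T' ⊆ ascents P ∧ Ψ = glue (T' : Set ℕ) P := by
  induction h with
  | refl => exact ⟨T, subset_rfl, hT, rfl⟩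
  | tail _ hcov ih =>
    obtain ⟨T', hTT', hT', rfl⟩ := ih
    obtain ⟨L₁, B, C, L₂, hsplit, hBC, rfl⟩ := hcov
    obtain ⟨j, hj, hjB, hjC, hglue⟩ := exists_glue_insert_eq_of_glue_eq hsplit
    have hjasc : j ∈ ascents P := by
      simp only [ascents, Finset.mem_filter, Finset.mem_range]
      exact ⟨by omega, fun x hx y hy => hBC x (hjB hx) y (hjC hy)⟩
    exact ⟨insert j T', hTT'.trans (Finset.subset_insert _ _), Finset.insert_subset hjasc hT',
      by rw [Finset.coe_insert, hglue]⟩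

lemma leStarC_glue_iff {P : List (Finset ℕ)} (hne : ∀ B ∈ P, B.Nonempty)
    (hd : P.Pairwise Disjoint) {T T' : Finset ℕ} (hT : T ⊆ ascents P) (hT' : T' ⊆ ascents P) :
    leStarC (glue (T : Set ℕ) P) (glue (T' : Set ℕ) P) ↔ T ⊆ T' := by
  refine ⟨fun h => ?_, fun h => leStarC_glue_of_subset hne h hT'⟩
  obtain ⟨T'', hTT'', hT'', heq⟩ := exists_eq_glue_of_leStarC hT h
  rwa [glue_injOn_ascents hne hd hT' hT'' heq]

theorem composition_component_boolean_general (n : ℕ) (P : List (Finset ℕ))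
    (hP : IsSetComposition n P) :
    ∃ e : {Φ : List (Finset ℕ) // IsSetComposition n Φ ∧ leStarC P Φ} ≃
        {T : Finset ℕ // T ⊆ (Finset.range (P.length - 1)).filter
            (fun i => ∀ x ∈ P.getD i ∅, ∀ y ∈ P.getD (i + 1) ∅, x < y)},
      ∀ Φ Ψ, leStarC Φ.1 Ψ.1 ↔ (e Φ).1 ⊆ (e Ψ).1 := by
  let f : {T : Finset ℕ // T ⊆ ascents P} → {Φ // IsSetComposition n Φ ∧ leStarC P Φ} :=
    fun T => ⟨glue (T : Set ℕ) P, hP.glue _, by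
      simpa [glue_empty] using leStarC_glue_of_subset hP.1 (Finset.empty_subset T.1) T.2⟩
  have hf : Function.Bijective f := by
    refine ⟨fun T T' h => Subtype.ext (glue_injOn_ascents hP.1 hP.2.1 T.2 T'.2
      (congrArg Subtype.val h)), fun Φ => ?_⟩
    obtain ⟨T, -, hT, h⟩ := exists_eq_glue_of_leStarC (P := P) (Finset.empty_subset _)
      (by simpa [glue_empty] using Φ.2.2)
    exact ⟨⟨T, hT⟩, Subtype.ext h.symm⟩
  refine ⟨(Equiv.ofBijective f hf).symm, fun Φ Ψ => ?_⟩
  obtain ⟨T, rfl⟩ := hf.2 Φ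
  obtain ⟨T', rfl⟩ := hf.2 Ψ
  rw [Equiv.ofBijective_symm_apply_apply, Equiv.ofBijective_symm_apply_apply]
  exact leStarC_glue_iff hP.1 hP.2.1 T.2 T'.2

/-- the connected component of a minimal element `P` (a set composition all
of whose parts are singletons, i.e. a permutation) in the poset of set compositions of
`[n]` under `≤_*` is a boolean lattice on the set `{i : P_i < P_{i+1}}`. -/
theorem composition_component_boolean (n : ℕ) (P : List (Finset ℕ))
    (hP : IsSetComposition n P) (hsing : ∀ p ∈ P, p.card = 1) :
    ∃ e : {Φ : List (Finset ℕ) // IsSetComposition n Φ ∧ leStarC P Φ} ≃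
        {T : Finset ℕ // T ⊆ (Finset.range (P.length - 1)).filter
            (fun i => ∀ x ∈ P.getD i ∅, ∀ y ∈ P.getD (i + 1) ∅, x < y)},
      ∀ Φ Ψ, leStarC Φ.1 Ψ.1 ↔ (e Φ).1 ⊆ (e Ψ).1 :=
  composition_component_boolean_general n P hP

end
end

section
/- The algebra NCQSym is freely generated by the elements {Q_Φ : Φ atomic set composition}. -/
open scoped Classical
noncomputable section

/-!
Send a word `a₁ ⋯ a_k` of atomic set compositions to `a₁|⋯|a_k`; by existence and uniqueness
of atomic factorizations this is a bijection onto all set compositions. In a product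
`M_Φ M_Ψ` every `M_Γ` has at most `ℓ(Φ) + ℓ(Ψ)` parts, with equality only for `Γ = Φ|Ψ`, which
occurs with coefficient one; and `Q_Φ = M_Φ +` (terms with fewer parts). Hence
`Q_{a₁} ⋯ Q_{a_k} = M_{a₁|⋯|a_k} +` (terms with fewer parts), so the images of the words are
unitriangular with respect to the basis `(M_Γ)` ordered by number of parts, and form a basis.
-/

theorem FreeAlgebra.lift_basisFreeMonoid {R X A : Type*} [CommSemiring R] [Semiring A]
    [Algebra R A] (f : X → A) (w : FreeMonoid X) :
    FreeAlgebra.lift R f (FreeAlgebra.basisFreeMonoid R X w) = (w.toList.map f).prod := by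
  simp [FreeAlgebra.basisFreeMonoid, FreeAlgebra.equivMonoidAlgebraFreeMonoid,
    FreeMonoid.lift_apply, map_list_prod, Function.comp_def]

namespace Module.Basis

variable {ι K V α : Type*} [Ring K] [AddCommGroup V] [Module K V] [LinearOrder α]
  (b : Basis ι K V) {key : ι → α} {v : ι → V}

theorem repr_apply_of_unitriangular
    (hv : ∀ i, v i - b i ∈ Submodule.span K (b '' {j | key j < key i})) {i k : ι}
    (hki : key k ≤ key i) : b.repr (v k) i = Finsupp.single k 1 i := by
  have hi : i ∉ (b.repr (v k - b k)).support := fun h =>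
    (b.mem_span_image.1 (hv k) h).not_ge hki
  rwa [Finsupp.notMem_support_iff, map_sub, Finsupp.sub_apply, sub_eq_zero, b.repr_self] at hi

theorem linearIndependent_of_unitriangular
    (hv : ∀ i, v i - b i ∈ Submodule.span K (b '' {j | key j < key i})) :
    LinearIndependent K v := by
  rw [linearIndependent_iff]
  intro l hl
  by_contra hne
  obtain ⟨i, hi, hmax⟩ := l.support.exists_max_image key (Finsupp.support_nonempty_iff.2 hne)
  have hcoord : b.repr (Finsupp.linearCombination K v l) i = l i := by
    rw [Finsupp.linearCombination_apply, Finsupp.sum, map_sum, Finset.sum_apply',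
      Finset.sum_eq_single i (fun k hk hki => ?_) (absurd hi)]
    all_goals
      rw [map_smul, Finsupp.smul_apply, b.repr_apply_of_unitriangular hv (hmax _ ‹_›)]
    · simp
    · simp [hki]
  exact Finsupp.mem_support_iff.1 hi (by rw [← hcoord, hl, map_zero, Finsupp.zero_apply])

theorem span_eq_top_of_unitriangular [WellFoundedLT α]
    (hv : ∀ i, v i - b i ∈ Submodule.span K (b '' {j | key j < key i})) :
    Submodule.span K (Set.range v) = ⊤ := by
  rw [eq_top_iff, ← b.span_eq, Submodule.span_le]
  rintro _ ⟨i, rfl⟩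
  induction hk : key i using WellFoundedLT.induction generalizing i with
  | _ a ih =>
    have hlow : Submodule.span K (b '' {j | key j < key i}) ≤ Submodule.span K (Set.range v) := by
      rw [Submodule.span_le]
      rintro _ ⟨j, hj, rfl⟩
      exact ih _ (hk ▸ hj) j rfl
    simpa using Submodule.sub_mem _ (Submodule.subset_span (Set.mem_range_self i)) (hlow (hv i))

end Module.Basis

theorem mem_foldr_union {Φ : List (Finset ℕ)} {s : Finset ℕ} {x : ℕ} :
    x ∈ Φ.foldr (· ∪ ·) s ↔ (∃ c ∈ Φ, x ∈ c) ∨ x ∈ s := by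
  induction Φ with
  | nil => simp
  | cons c Φ ih => simp [ih, or_assoc]

theorem isSetComposition_iff {n : ℕ} {Φ : List (Finset ℕ)} :
    IsSetComposition n Φ ↔ (∀ c ∈ Φ, c.Nonempty) ∧ Φ.Pairwise Disjoint ∧
      ∀ x, (∃ c ∈ Φ, x ∈ c) ↔ 1 ≤ x ∧ x ≤ n := by
  simp only [IsSetComposition, Finset.ext_iff, mem_foldr_union, ground, Finset.mem_Icc,
    Finset.notMem_empty, or_false]

theorem isSetComposition_nil : IsSetComposition 0 [] := by
  simp [IsSetComposition, ground]

theorem length_le_card_foldr_union {Φ : List (Finset ℕ)} (hne : ∀ c ∈ Φ, c.Nonempty)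
    (hdisj : Φ.Pairwise Disjoint) :
    Φ.length ≤ (Φ.foldr (· ∪ ·) ∅).card := by
  induction Φ with
  | nil => simp
  | cons c Φ ih =>
    rw [List.pairwise_cons] at hdisj
    have hc : Disjoint c (Φ.foldr (· ∪ ·) ∅) := by
      rw [Finset.disjoint_left]
      intro x hxc hx
      obtain ⟨d, hd, hxd⟩ := (mem_foldr_union.1 hx).resolve_right (Finset.notMem_empty x)
      exact Finset.disjoint_left.1 (hdisj.1 d hd) hxc hxd
    rw [List.foldr_cons, Finset.card_union_of_disjoint hc, List.length_cons]
    have := (hne c List.mem_cons_self).card_pos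
    have := ih (fun d hd => hne d (List.mem_cons_of_mem c hd)) hdisj.2
    omega

namespace IsSetComposition

variable {n : ℕ} {Φ : List (Finset ℕ)}

theorem mem_ground (h : IsSetComposition n Φ) {c : Finset ℕ} (hc : c ∈ Φ) {x : ℕ}
    (hx : x ∈ c) : 1 ≤ x ∧ x ≤ n :=
  ((isSetComposition_iff.1 h).2.2 x).1 ⟨c, hc, hx⟩

theorem eq_nil_of_zero (h : IsSetComposition 0 Φ) : Φ = [] := by
  refine List.eq_nil_iff_forall_not_mem.2 fun c hc => ?_
  obtain ⟨x, hx⟩ := h.1 c hc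
  have := h.mem_ground hc hx
  omega

theorem length_le (h : IsSetComposition n Φ) : Φ.length ≤ n := by
  simpa [h.2.2, ground] using length_le_card_foldr_union h.1 h.2.1

end IsSetComposition

theorem mem_listsOfLen_length {s : Finset (Finset ℕ)} {Φ : List (Finset ℕ)}
    (h : ∀ c ∈ Φ, c ∈ s) : Φ ∈ listsOfLen s Φ.length := by
  induction Φ with
  | nil => simp [listsOfLen]
  | cons c Φ ih =>
    simp only [List.length_cons, listsOfLen, Finset.mem_image, Finset.mem_product]
    exact ⟨(c, Φ), ⟨h c List.mem_cons_self, ih fun d hd => h d (List.mem_cons_of_mem c hd)⟩, rfl⟩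

theorem mem_SCs {n : ℕ} {P : List (Finset ℕ) → Prop} {Φ : List (Finset ℕ)} :
    Φ ∈ SCs n P ↔ IsSetComposition n Φ ∧ P Φ := by
  refine ⟨fun h => (Finset.mem_filter.1 h).2, fun h => Finset.mem_filter.2 ⟨?_, h⟩⟩
  refine Finset.mem_biUnion.2 ⟨Φ.length, Finset.mem_range.2 (Nat.lt_succ_of_le h.1.length_le),
    mem_listsOfLen_length fun c hc => Finset.mem_powerset.2 fun x hx => ?_⟩
  simpa [ground] using h.1.mem_ground hc hx

theorem mem_shiftC {n : ℕ} {Ψ : List (Finset ℕ)} {c : Finset ℕ} :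
    c ∈ shiftC n Ψ ↔ ∃ e ∈ Ψ, e.image (· + n) = c :=
  List.mem_map

theorem pairwise_disjoint_shiftC {n : ℕ} {Ψ : List (Finset ℕ)} :
    (shiftC n Ψ).Pairwise Disjoint ↔ Ψ.Pairwise Disjoint := by
  simp only [shiftC, List.pairwise_map, Finset.disjoint_image (add_left_injective n)]

theorem IsSetComposition.concat {n m : ℕ} {Φ Ψ : List (Finset ℕ)}
    (hΦ : IsSetComposition n Φ) (hΨ : IsSetComposition m Ψ) :
    IsSetComposition (n + m) (concatC n Φ Ψ) := by
  rw [isSetComposition_iff] at hΦ hΨ ⊢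
  refine ⟨?_, ?_, fun x => ?_⟩
  · intro c hc
    rcases List.mem_append.1 hc with hc | hc
    · exact hΦ.1 c hc
    · obtain ⟨e, he, rfl⟩ := mem_shiftC.1 hc
      exact (hΨ.1 e he).image _
  · refine List.pairwise_append.2 ⟨hΦ.2.1, pairwise_disjoint_shiftC.2 hΨ.2.1, ?_⟩
    intro c hc d hd
    obtain ⟨e, he, rfl⟩ := mem_shiftC.1 hd
    refine Finset.disjoint_left.2 fun x hxc hxe => ?_
    obtain ⟨y, hy, rfl⟩ := Finset.mem_image.1 hxe
    have := (hΦ.2.2 _).1 ⟨c, hc, hxc⟩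
    have := (hΨ.2.2 y).1 ⟨e, he, hy⟩
    omega
  · have hΦx := hΦ.2.2 x
    have hΨx := hΨ.2.2 (x - n)
    simp only [concatC, List.mem_append, mem_shiftC] at hΦx hΨx ⊢
    constructor
    · rintro ⟨c, hc | ⟨e, he, rfl⟩, hxc⟩
      · have := hΦx.1 ⟨c, hc, hxc⟩
        omega
      · obtain ⟨y, hy, rfl⟩ := Finset.mem_image.1 hxc
        have := (hΨ.2.2 y).1 ⟨e, he, hy⟩
        omega
    · intro hx
      by_cases hxn : x ≤ n
      · obtain ⟨c, hc, hxc⟩ := hΦx.2 ⟨hx.1, hxn⟩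
        exact ⟨c, Or.inl hc, hxc⟩
      · obtain ⟨e, he, hxe⟩ := hΨx.2 (by omega)
        exact ⟨_, Or.inr ⟨e, he, rfl⟩, Finset.mem_image.2 ⟨x - n, hxe, by omega⟩⟩

theorem IsSetComposition.of_concat {p q : ℕ} {A Z : List (Finset ℕ)}
    (hA : IsSetComposition p A) (hAZ : IsSetComposition q (concatC p A Z))
    (hpos : ∀ c ∈ Z, ∀ x ∈ c, 1 ≤ x) : IsSetComposition (q - p) Z := by
  rw [isSetComposition_iff] at hA hAZ ⊢
  simp only [concatC, List.mem_append, mem_shiftC, List.pairwise_append] at hAZ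
  refine ⟨fun c hc => ?_, pairwise_disjoint_shiftC.1 hAZ.2.1.2.1, fun x => ⟨?_, fun hx => ?_⟩⟩
  · exact (hAZ.1 _ (Or.inr ⟨c, hc, rfl⟩)).of_image
  · rintro ⟨c, hc, hxc⟩
    have := (hAZ.2.2 (x + p)).1 ⟨_, Or.inr ⟨c, hc, rfl⟩, Finset.mem_image_of_mem _ hxc⟩
    have := hpos c hc x hxc
    omega
  · obtain ⟨c, hc | ⟨e, he, rfl⟩, hxc⟩ := (hAZ.2.2 (x + p)).2 (by omega)
    · have := (hA.2.2 (x + p)).1 ⟨c, hc, hxc⟩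
      omega
    · obtain ⟨y, hy, hyx⟩ := Finset.mem_image.1 hxc
      exact ⟨e, he, by rwa [← add_right_cancel hyx]⟩

theorem isSetComposition_onePartC (n : ℕ) : IsSetComposition n (onePartC n) := by
  unfold onePartC
  split_ifs with hn
  · exact hn ▸ isSetComposition_nil
  · refine isSetComposition_iff.2 ⟨?_, by simp, fun x => by simp [ground]⟩
    simpa [ground] using Nat.one_le_iff_ne_zero.2 hn

theorem concatC_assoc (j l : ℕ) (P Q R : List (Finset ℕ)) :
    concatC (j + l) (concatC j P Q) R = concatC j P (concatC l Q R) := by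
  simp only [concatC, shiftC, List.map_append, List.map_map, List.append_assoc]
  congr 3
  funext a
  simp [Finset.image_image, Function.comp_def, add_assoc, add_comm l j]

theorem concatListC_append (L₁ L₂ : List (ℕ × List (Finset ℕ))) :
    concatListC (L₁ ++ L₂) = ((concatListC L₁).1 + (concatListC L₂).1,
      concatC (concatListC L₁).1 (concatListC L₁).2 (concatListC L₂).2) := by
  induction L₁ with
  | nil => simp [concatListC, concatC, shiftC]
  | cons p L₁ ih =>
    simp only [List.cons_append, concatListC, ih, Prod.mk.injEq]
    refine ⟨by ring, ?_⟩
    rw [add_comm _ p.1, concatC_assoc]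

theorem isSetComposition_concatListC {L : List (ℕ × List (Finset ℕ))}
    (h : ∀ p ∈ L, IsSetComposition p.1 p.2) :
    IsSetComposition (concatListC L).1 (concatListC L).2 := by
  induction L with
  | nil => exact isSetComposition_nil
  | cons p L ih =>
    rw [concatListC, add_comm]
    exact (h p List.mem_cons_self).concat (ih fun q hq => h q (List.mem_cons_of_mem p hq))

theorem List.prefix_of_append_eq_append {α : Type*} {l₁ r₁ l₂ r₂ : List α} {P : α → Prop}
    (h : l₁ ++ r₁ = l₂ ++ r₂) (h₁ : ∀ x ∈ l₁, P x) (h₂ : ∀ x ∈ r₂, ¬ P x) : l₁ <+: l₂ := by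
  rcases List.append_eq_append_iff.1 h with ⟨t, ht, -⟩ | ⟨_ | ⟨x, t⟩, ht, hr⟩
  · exact ⟨t, ht.symm⟩
  · exact ⟨[], by simpa using ht⟩
  · exact (h₂ x (by simp [hr]) (h₁ x (by simp [ht]))).elim

theorem exists_concatC_eq_of_concatC_eq {p q s t : ℕ} {A B X Y : List (Finset ℕ)}
    (hA : IsSetComposition p A) (hB : IsSetComposition q B) (hX : IsSetComposition s X)
    (hY : IsSetComposition t Y) (hpq : p ≤ q) (h : concatC p A X = concatC q B Y) :
    ∃ Z, IsSetComposition (q - p) Z ∧ B = concatC p A Z := by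
  -- The parts of `A` lie in `[p]`, those of the shifted `Y` do not.
  obtain ⟨T, rfl⟩ : A <+: B := by
    refine List.prefix_of_append_eq_append (P := (· ⊆ ground p)) h
      (fun c hc x hx => Finset.mem_Icc.2 (hA.mem_ground hc hx)) fun c hc hsub => ?_
    obtain ⟨e, he, rfl⟩ := mem_shiftC.1 hc
    obtain ⟨y, hy⟩ := hY.1 e he
    have := hY.mem_ground he hy
    have := Finset.mem_Icc.1 (hsub (Finset.mem_image_of_mem _ hy))
    omega
  have hT : shiftC p X = T ++ shiftC q Y :=
    List.append_cancel_left (by simpa only [concatC, List.append_assoc] using h)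
  have hTZ : T = shiftC p (X.take T.length) := by
    rw [shiftC, List.map_take, ← shiftC, hT, List.take_left]
  rw [hTZ] at hB ⊢
  exact ⟨_, hA.of_concat hB fun c hc x hx => (hX.mem_ground (List.mem_of_mem_take hc) hx).1, rfl⟩

theorem AtomicC.eq_of_concatC_eq_of_le {p q s t : ℕ} {A B X Y : List (Finset ℕ)}
    (hA : AtomicC p A) (hB : AtomicC q B) (hX : IsSetComposition s X)
    (hY : IsSetComposition t Y) (hpq : p ≤ q) (h : concatC p A X = concatC q B Y) :
    p = q ∧ A = B := by
  obtain ⟨Z, hZ, rfl⟩ := exists_concatC_eq_of_concatC_eq hA.1 hB.1 hX hY hpq h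
  rcases hpq.lt_or_eq with hlt | rfl
  · exact (hB.2.2 ⟨p, A, Z, hA.2.1, hlt, hA.1, hZ, rfl⟩).elim
  · rw [Nat.sub_self] at hZ
    simp [hZ.eq_nil_of_zero, concatC, shiftC]

theorem AtomicC.eq_of_concatC_eq {p q s t : ℕ} {A B X Y : List (Finset ℕ)}
    (hA : AtomicC p A) (hB : AtomicC q B) (hX : IsSetComposition s X)
    (hY : IsSetComposition t Y) (h : concatC p A X = concatC q B Y) :
    p = q ∧ A = B ∧ X = Y := by
  obtain ⟨rfl, rfl⟩ : p = q ∧ A = B := (le_total p q).elim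
    (hA.eq_of_concatC_eq_of_le hB hX hY · h)
    fun hqp => (hB.eq_of_concatC_eq_of_le hA hY hX hqp h.symm).imp Eq.symm Eq.symm
  refine ⟨rfl, rfl, ?_⟩
  have hshift : shiftC p X = shiftC p Y := List.append_cancel_left h
  exact List.map_injective_iff.2 (Finset.image_injective (add_left_injective p)) hshift

theorem concatListC_map_val_injective :
    Function.Injective fun w : List AtomCIdx => concatListC (w.map Subtype.val) := by
  intro w₁ w₂ h
  dsimp only at h
  induction w₁ generalizing w₂ with
  | nil =>
    cases w₂ with
    | nil => rfl
    | cons b w₂ =>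
      have := congrArg Prod.fst h
      have := b.2.2.1
      simp only [List.map_nil, List.map_cons, concatListC] at *
      omega
  | cons a w₁ ih =>
    cases w₂ with
    | nil =>
      have := congrArg Prod.fst h
      have := a.2.2.1
      simp only [List.map_nil, List.map_cons, concatListC] at *
      omega
    | cons b w₂ =>
      simp only [List.map_cons, concatListC, Prod.mk.injEq] at h
      obtain ⟨hsize, hconcat⟩ := h
      have hval : ∀ w : List AtomCIdx, ∀ p ∈ w.map Subtype.val, IsSetComposition p.1 p.2 := by
        intro w p hp
        obtain ⟨c, -, rfl⟩ := List.mem_map.1 hp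
        exact c.2.1
      obtain ⟨h1, h2, hrest⟩ := a.2.eq_of_concatC_eq b.2 (isSetComposition_concatListC (hval w₁))
        (isSetComposition_concatListC (hval w₂)) hconcat
      rw [Subtype.ext (Prod.ext h1 h2), ih (Prod.ext (by omega) hrest)]

theorem exists_concatListC_eq {n : ℕ} {Φ : List (Finset ℕ)} (hΦ : IsSetComposition n Φ) :
    ∃ w : List AtomCIdx, concatListC (w.map Subtype.val) = (n, Φ) := by
  induction n using Nat.strong_induction_on generalizing Φ with
  | _ n ih =>
    rcases Nat.eq_zero_or_pos n with rfl | hn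
    · exact ⟨[], by simp [concatListC, hΦ.eq_nil_of_zero]⟩
    by_cases hat : AtomicC n Φ
    · exact ⟨[⟨(n, Φ), hat⟩], by simp [concatListC, concatC, shiftC]⟩
    obtain ⟨k, Ψ, Γ, hk, hkn, hΨ, hΓ, rfl⟩ :
        ∃ k Ψ Γ, 0 < k ∧ k < n ∧ IsSetComposition k Ψ ∧ IsSetComposition (n - k) Γ ∧
          Φ = concatC k Ψ Γ := by
      simpa [AtomicC, hΦ, hn] using hat
    obtain ⟨w₁, h₁⟩ := ih k hkn hΨ
    obtain ⟨w₂, h₂⟩ := ih (n - k) (by omega) hΓ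
    refine ⟨w₁ ++ w₂, ?_⟩
    rw [List.map_append, concatListC_append, h₁, h₂, Prod.mk.injEq]
    exact ⟨by omega, rfl⟩

theorem meetC_cons (c : Finset ℕ) (Γ Δ : List (Finset ℕ)) :
    meetC (c :: Γ) Δ = (Δ.map (c ∩ ·)).filter (·.Nonempty) ++ meetC Γ Δ := by
  simp [meetC, List.flatMap_cons, List.filter_append]

theorem filter_map_inter_eq_singleton_or_one_lt_length {c : Finset ℕ} {Δ : List (Finset ℕ)}
    (hc : c.Nonempty) (hcov : ∀ x ∈ c, ∃ d ∈ Δ, x ∈ d) :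
    (Δ.map (c ∩ ·)).filter (·.Nonempty) = [c] ∨
      1 < ((Δ.map (c ∩ ·)).filter (·.Nonempty)).length := by
  have hcovL : ∀ x ∈ c, ∃ e ∈ (Δ.map (c ∩ ·)).filter (·.Nonempty), x ∈ e := by
    intro x hx
    obtain ⟨d, hd, hxd⟩ := hcov x hx
    have hx' : x ∈ c ∩ d := Finset.mem_inter.2 ⟨hx, hxd⟩
    exact ⟨c ∩ d, List.mem_filter.2 ⟨List.mem_map_of_mem hd, by simpa using ⟨x, hx'⟩⟩, hx'⟩
  have hsub : ∀ e ∈ (Δ.map (c ∩ ·)).filter (·.Nonempty), e ⊆ c := by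
    intro e he
    obtain ⟨d, -, rfl⟩ := List.mem_map.1 (List.mem_of_mem_filter he)
    exact Finset.inter_subset_left
  generalize (Δ.map (c ∩ ·)).filter (·.Nonempty) = L at hcovL hsub ⊢
  match L, hcovL, hsub with
  | [], hcovL, _ =>
    obtain ⟨x, hx⟩ := hc
    simpa using hcovL x hx
  | [e], hcovL, hsub =>
    left
    simp only [List.mem_singleton, exists_eq_left, forall_eq] at hcovL hsub
    rw [Finset.Subset.antisymm hsub hcovL]
  | _ :: _ :: _, _, _ => right; simp

theorem meetC_eq_self_or_length_lt {Γ Δ : List (Finset ℕ)} (hne : ∀ c ∈ Γ, c.Nonempty)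
    (hcov : ∀ c ∈ Γ, ∀ x ∈ c, ∃ d ∈ Δ, x ∈ d) :
    meetC Γ Δ = Γ ∨ Γ.length < (meetC Γ Δ).length := by
  induction Γ with
  | nil => exact Or.inl rfl
  | cons c Γ ih =>
    rw [meetC_cons]
    have hc := filter_map_inter_eq_singleton_or_one_lt_length (hne c List.mem_cons_self)
      (hcov c List.mem_cons_self)
    have hΓ := ih (fun d hd => hne d (List.mem_cons_of_mem c hd))
      (fun d hd => hcov d (List.mem_cons_of_mem c hd))
    rcases hc with hc | hc <;> rcases hΓ with hΓ | hΓ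
    · exact Or.inl (by rw [hc, hΓ]; rfl)
    all_goals
      right
      simp only [List.length_append, List.length_cons]
    · rw [hc]; simp only [List.length_singleton]; omega
    · rw [hΓ]; omega
    · omega

theorem meetC_eq_self_of_forall {Γ Δ : List (Finset ℕ)}
    (h : ∀ c ∈ Γ, (Δ.map (c ∩ ·)).filter (·.Nonempty) = [c]) : meetC Γ Δ = Γ := by
  induction Γ with
  | nil => rfl
  | cons c Γ ih =>
    rw [meetC_cons, h c List.mem_cons_self, ih fun d hd => h d (List.mem_cons_of_mem c hd)]
    rfl

theorem filter_map_inter_concatC_onePartC {n m : ℕ} {c : Finset ℕ} (hc : c.Nonempty)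
    (hcnm : c ⊆ ground n ∨ c ⊆ (ground m).image (· + n)) :
    ((concatC n (onePartC n) (onePartC m)).map (c ∩ ·)).filter (·.Nonempty) = [c] := by
  have hdisj : Disjoint (ground n) ((ground m).image (· + n)) := by
    simp only [ground, Finset.image_add_right_Icc, Finset.disjoint_left, Finset.mem_Icc]
    omega
  rcases hcnm with hcn | hcm
  · have hn : n ≠ 0 := by rintro rfl; simpa [ground] using hc.mono hcn
    have hcm : c ∩ (ground m).image (· + n) = ∅ :=
      Finset.disjoint_iff_inter_eq_empty.1 (hdisj.mono_left hcn)
    simp [concatC, shiftC, onePartC, hn, Finset.inter_eq_left.2 hcn, hc, hcm]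
  · have hm : m ≠ 0 := by rintro rfl; simpa [ground] using hc.mono hcm
    have hcn : c ∩ ground n = ∅ :=
      Finset.disjoint_iff_inter_eq_empty.1 (hdisj.symm.mono_left hcm)
    simp [concatC, shiftC, onePartC, hm, Finset.inter_eq_left.2 hcm, hc, hcn]

theorem meetC_concatC_onePartC {n m : ℕ} {Φ Ψ : List (Finset ℕ)}
    (hΦ : IsSetComposition n Φ) (hΨ : IsSetComposition m Ψ) :
    meetC (concatC n Φ Ψ) (concatC n (onePartC n) (onePartC m)) = concatC n Φ Ψ := by
  refine meetC_eq_self_of_forall fun c hc => ?_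
  rcases List.mem_append.1 hc with hc | hc
  · exact filter_map_inter_concatC_onePartC (hΦ.1 c hc)
      (Or.inl fun x hx => Finset.mem_Icc.2 (hΦ.mem_ground hc hx))
  · obtain ⟨e, he, rfl⟩ := mem_shiftC.1 hc
    exact filter_map_inter_concatC_onePartC ((hΨ.1 e he).image _)
      (Or.inr (Finset.image_subset_image fun x hx => Finset.mem_Icc.2 (hΨ.mem_ground he hx)))

theorem length_concatC (n : ℕ) (Φ Ψ : List (Finset ℕ)) :
    (concatC n Φ Ψ).length = Φ.length + Ψ.length := by
  simp [concatC, shiftC]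

theorem eq_concatC_or_length_lt_of_meetC_eq {n m : ℕ} {Γ Φ Ψ : List (Finset ℕ)}
    (hΓ : IsSetComposition (n + m) Γ)
    (h : meetC Γ (concatC n (onePartC n) (onePartC m)) = concatC n Φ Ψ) :
    Γ = concatC n Φ Ψ ∨ Γ.length < Φ.length + Ψ.length := by
  have hΔ := (isSetComposition_onePartC n).concat (isSetComposition_onePartC m)
  have := meetC_eq_self_or_length_lt hΓ.1 fun c hc x hx =>
    ((isSetComposition_iff.1 hΔ).2.2 x).2 (hΓ.mem_ground hc hx)
  rwa [h, eq_comm, length_concatC] at this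

theorem eq_or_length_lt_of_leStarC {Φ Ψ : List (Finset ℕ)} (h : leStarC Φ Ψ) :
    Ψ = Φ ∨ Ψ.length < Φ.length := by
  induction h with
  | refl => exact Or.inl rfl
  | tail _ hcov ih =>
    obtain ⟨L₁, a, b, L₂, rfl, -, rfl⟩ := hcov
    right
    have : (L₁ ++ (a ∪ b) :: L₂).length < (L₁ ++ a :: b :: L₂).length := by simp
    rcases ih with rfl | h
    exacts [this, this.trans h]

def concatAtoms (w : List AtomCIdx) : SCIdx :=
  ⟨concatListC (w.map Subtype.val), isSetComposition_concatListC fun p hp => by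
    obtain ⟨a, -, rfl⟩ := List.mem_map.1 hp
    exact a.2.1⟩

theorem concatAtoms_bijective : Function.Bijective concatAtoms := by
  refine ⟨fun w₁ w₂ h => concatListC_map_val_injective (congrArg Subtype.val h), fun i => ?_⟩
  obtain ⟨w, hw⟩ := exists_concatListC_eq i.2
  exact ⟨w, Subtype.ext hw⟩

namespace NCQSym

variable {R : Type*} [Ring R] [Algebra ℚ R] (M : ℕ → List (Finset ℕ) → R)

def spanShorter (ℓ : ℕ) : Submodule ℚ R :=
  Submodule.span ℚ ((fun i : SCIdx => M i.1.1 i.1.2) '' {i | i.1.2.length < ℓ})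

def Q (a : AtomCIdx) : R := ∑ Φ' ∈ SCs a.1.1 (fun Φ' => leStarC a.1.2 Φ'), M a.1.1 Φ'

variable {M}

theorem spanShorter_mono {a b : ℕ} (hab : a ≤ b) : spanShorter M a ≤ spanShorter M b :=
  Submodule.span_mono (Set.image_mono fun _ hi => lt_of_lt_of_le hi hab)

theorem M_mem_spanShorter {n ℓ : ℕ} {Φ : List (Finset ℕ)} (hΦ : IsSetComposition n Φ)
    (hℓ : Φ.length < ℓ) : M n Φ ∈ spanShorter M ℓ :=
  Submodule.subset_span ⟨⟨(n, Φ), hΦ⟩, hℓ, rfl⟩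

theorem Q_sub_M_mem_spanShorter (a : AtomCIdx) :
    Q M a - M a.1.1 a.1.2 ∈ spanShorter M a.1.2.length := by
  have ha : a.1.2 ∈ SCs a.1.1 (fun Φ' => leStarC a.1.2 Φ') :=
    mem_SCs.2 ⟨a.2.1, Relation.ReflTransGen.refl⟩
  rw [Q, ← Finset.sum_erase_add _ _ ha, add_sub_cancel_right]
  refine Submodule.sum_mem _ fun Φ' hΦ' => ?_
  obtain ⟨hne, hΦ'⟩ := Finset.mem_erase.1 hΦ'
  obtain ⟨hΦ'sc, hle⟩ := mem_SCs.1 hΦ'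
  exact M_mem_spanShorter hΦ'sc ((eq_or_length_lt_of_leStarC hle).resolve_left hne)

variable (hmul : ∀ n m Φ Ψ, IsSetComposition n Φ → IsSetComposition m Ψ →
  M n Φ * M m Ψ =
    ∑ Γ ∈ SCs (n + m)
        (fun Γ => meetC Γ (concatC n (onePartC n) (onePartC m)) = concatC n Φ Ψ),
      M (n + m) Γ)
include hmul

theorem M_mul_M_sub_M_concatC_mem_spanShorter {n m : ℕ} {Φ Ψ : List (Finset ℕ)}
    (hΦ : IsSetComposition n Φ) (hΨ : IsSetComposition m Ψ) :
    M n Φ * M m Ψ - M (n + m) (concatC n Φ Ψ) ∈ spanShorter M (Φ.length + Ψ.length) := by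
  have hlead : concatC n Φ Ψ ∈ SCs (n + m)
      (fun Γ => meetC Γ (concatC n (onePartC n) (onePartC m)) = concatC n Φ Ψ) :=
    mem_SCs.2 ⟨hΦ.concat hΨ, meetC_concatC_onePartC hΦ hΨ⟩
  rw [hmul n m Φ Ψ hΦ hΨ, ← Finset.sum_erase_add _ _ hlead, add_sub_cancel_right]
  refine Submodule.sum_mem _ fun Γ hΓ => ?_
  obtain ⟨hne, hΓ⟩ := Finset.mem_erase.1 hΓ
  obtain ⟨hΓsc, hmeet⟩ := mem_SCs.1 hΓ
  exact M_mem_spanShorter hΓsc ((eq_concatC_or_length_lt_of_meetC_eq hΓsc hmeet).resolve_left hne)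

theorem M_mul_M_mem_spanShorter {n m : ℕ} {Φ Ψ : List (Finset ℕ)}
    (hΦ : IsSetComposition n Φ) (hΨ : IsSetComposition m Ψ) :
    M n Φ * M m Ψ ∈ spanShorter M (Φ.length + Ψ.length + 1) := by
  have hlead : M (n + m) (concatC n Φ Ψ) ∈ spanShorter M (Φ.length + Ψ.length + 1) :=
    M_mem_spanShorter (hΦ.concat hΨ) (by rw [length_concatC]; omega)
  simpa using Submodule.add_mem _
    (spanShorter_mono (Nat.le_succ _) (M_mul_M_sub_M_concatC_mem_spanShorter hmul hΦ hΨ)) hlead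

-- The truncation in `a + b - 1` is harmless: for `a = 0` or `b = 0` the left side is `⊥`.
theorem spanShorter_mul_le (a b : ℕ) :
    spanShorter M a * spanShorter M b ≤ spanShorter M (a + b - 1) := by
  rw [spanShorter, spanShorter, Submodule.span_mul_span, Submodule.span_le]
  rintro _ ⟨_, ⟨i, hi, rfl⟩, _, ⟨j, hj, rfl⟩, rfl⟩
  have hi : i.1.2.length < a := hi
  have hj : j.1.2.length < b := hj
  exact spanShorter_mono (by omega) (M_mul_M_mem_spanShorter hmul i.2 j.2)

theorem prod_Q_sub_M_mem_spanShorter (hone : M 0 [] = 1) (w : List AtomCIdx) :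
    (w.map (Q M)).prod - M (concatAtoms w).1.1 (concatAtoms w).1.2 ∈
      spanShorter M (concatAtoms w).1.2.length := by
  induction w with
  | nil => simp [concatAtoms, concatListC, hone]
  | cons a w ih =>
    set P := (w.map (Q M)).prod
    set Γ := concatAtoms w
    have hconcat : concatAtoms (a :: w) =
        ⟨(a.1.1 + Γ.1.1, concatC a.1.1 a.1.2 Γ.1.2), a.2.1.concat Γ.2⟩ := by
      simp only [concatAtoms, List.map_cons, concatListC, Γ, add_comm]
    have hmul_mem {x y : R} {k l : ℕ} (hx : x ∈ spanShorter M k) (hy : y ∈ spanShorter M l)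
        (hkl : k + l - 1 ≤ a.1.2.length + Γ.1.2.length) :
        x * y ∈ spanShorter M (a.1.2.length + Γ.1.2.length) :=
      spanShorter_mono hkl (spanShorter_mul_le hmul k l (Submodule.mul_mem_mul hx hy))
    have hMa := M_mem_spanShorter (M := M) a.2.1 (Nat.lt_succ_self _)
    have hP : P ∈ spanShorter M (Γ.1.2.length + 1) := by
      simpa using Submodule.add_mem _ (spanShorter_mono (Nat.le_succ _) ih)
        (M_mem_spanShorter Γ.2 (Nat.lt_succ_self _))
    have hsplit : Q M a * P - M (a.1.1 + Γ.1.1) (concatC a.1.1 a.1.2 Γ.1.2) =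
        (M a.1.1 a.1.2 * M Γ.1.1 Γ.1.2 - M (a.1.1 + Γ.1.1) (concatC a.1.1 a.1.2 Γ.1.2)) +
          M a.1.1 a.1.2 * (P - M Γ.1.1 Γ.1.2) + (Q M a - M a.1.1 a.1.2) * P := by
      noncomm_ring
    rw [hconcat, List.map_cons, List.prod_cons, length_concatC, hsplit]
    refine Submodule.add_mem _ (Submodule.add_mem _
      (M_mul_M_sub_M_concatC_mem_spanShorter hmul a.2.1 Γ.2) (hmul_mem hMa ih (by omega)))
      (hmul_mem (Q_sub_M_mem_spanShorter a) hP (by omega))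

end NCQSym

/-- `NCQSym` (any algebra with basis `M_Φ` indexed by set compositions
satisfying the monomial product rule) is freely generated by the elements
`Q_Φ = ∑_{Φ' ≥_* Φ} M_{Φ'}` with `Φ` an atomic set composition. -/
theorem ncqsym_free {R : Type*} [Ring R] [Algebra ℚ R]
    (M : ℕ → List (Finset ℕ) → R)
    (hone : M 0 [] = 1)
    (hmul : ∀ n m Φ Ψ, IsSetComposition n Φ → IsSetComposition m Ψ →
      M n Φ * M m Ψ =
        ∑ Γ ∈ SCs (n + m)
            (fun Γ => meetC Γ (concatC n (onePartC n) (onePartC m)) = concatC n Φ Ψ),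
          M (n + m) Γ)
    (hli : LinearIndependent ℚ (fun i : SCIdx => M i.1.1 i.1.2))
    (hspan : Submodule.span ℚ (Set.range fun i : SCIdx => M i.1.1 i.1.2) = ⊤) :
    Function.Bijective
      ⇑(FreeAlgebra.lift ℚ
        (fun a : AtomCIdx => ∑ Φ' ∈ SCs a.1.1 (fun Φ' => leStarC a.1.2 Φ'), M a.1.1 Φ') :
          FreeAlgebra ℚ AtomCIdx →ₐ[ℚ] R) := by
  let b := Module.Basis.mk hli hspan.ge
  let e : FreeMonoid AtomCIdx ≃ SCIdx :=
    FreeMonoid.toList.trans (Equiv.ofBijective _ concatAtoms_bijective)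
  let v := (FreeAlgebra.basisFreeMonoid ℚ AtomCIdx).reindex e
  have htri : ∀ i, FreeAlgebra.lift ℚ (NCQSym.Q M) (v i) - b i ∈
      Submodule.span ℚ (b '' {j | j.1.2.length < i.1.2.length}) := by
    intro i
    obtain ⟨w, rfl⟩ := e.surjective i
    simpa [b, v, e, FreeAlgebra.lift_basisFreeMonoid, NCQSym.spanShorter] using
      NCQSym.prod_Q_sub_M_mem_spanShorter hmul hone w.toList
  exact LinearMap.bijective_of_linearIndependent_of_span_eq_top
    (f := (FreeAlgebra.lift ℚ (NCQSym.Q M)).toLinearMap) v.span_eq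
    (b.linearIndependent_of_unitriangular htri) (b.span_eq_top_of_unitriangular htri)

end
end
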